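/- Let y = Φx + v with x K-sparse with support T. If min_{j∈T}|x_j| > (2(1−δ_K)/(1 − 3δ_{2K})) ‖v‖₂ and δ_{2K} < 1/3, then for every K-element subset Λ ≠ T of {1,…,N}, ‖r_T‖₂ < ‖r_Λ‖₂, where r_I = (I − Φ_I(Φ_I'Φ_I)^{-1}Φ_I') y. Hence the candidate of cardinality K with minimum residual norm is exactly the support T. -/

import Mathlib

open Matrix Finset

noncomputable def l2 {n : Type*} [Fintype n] (x : n → ℝ) : ℝ :=
  Real.sqrt (∑ i, (x i) ^ 2)

def Sparse {N : ℕ} (K : ℕ) (x : Fin N → ℝ) : Prop :=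
  (Finset.univ.filter (fun i => x i ≠ 0)).card ≤ K

def RIP {M N : ℕ} (Φ : Matrix (Fin M) (Fin N) ℝ) (K : ℕ) (δ : ℝ) : Prop :=
  ∀ x : Fin N → ℝ, Sparse K x →
    (1 - δ) * (l2 x) ^ 2 ≤ (l2 (Φ.mulVec x)) ^ 2 ∧
    (l2 (Φ.mulVec x)) ^ 2 ≤ (1 + δ) * (l2 x) ^ 2

def colSub {M N : ℕ} (Φ : Matrix (Fin M) (Fin N) ℝ) (S : Finset (Fin N)) :
    Matrix (Fin M) {i // i ∈ S} ℝ := fun r c => Φ r c.1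

noncomputable def resid {M N : ℕ} (Φ : Matrix (Fin M) (Fin N) ℝ) (S : Finset (Fin N))
    (y : Fin M → ℝ) : Fin M → ℝ :=
  y - (colSub Φ S).mulVec
    ((((colSub Φ S)ᵀ * colSub Φ S)⁻¹).mulVec ((colSub Φ S)ᵀ.mulVec y))

def restr {N : ℕ} (x : Fin N → ℝ) (S : Finset (Fin N)) : {i // i ∈ S} → ℝ :=
  fun i => x i.1

/-!
On the true support `T` the residual `r_T` is a least-squares residual, orthogonal to the columns
of `Φ_T`, and `v = y - Φ x` differs from it by a vector in their span, so `‖r_T‖ ≤ ‖v‖`.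
For `Λ ≠ T` of the same size some `j ∈ T` is missed by `Λ`, and `r_Λ - v = Φ (x - z)` with `z`
supported on `Λ`; the vector `x - z` is `2K`-sparse and keeps the coordinate `x_j`, so the lower
RIP bound gives `‖r_Λ‖ ≥ √(1 - δ_{2K}) |x_j| - ‖v‖`. The hypothesis on `min |x_j|` together with
`1 - 3 δ_{2K} ≤ √(1 - δ_{2K}) (1 - δ_K)` makes this exceed `‖v‖`.
-/

section L2

variable {ι : Type*} [Fintype ι]

theorem l2_eq_norm (x : ι → ℝ) : l2 x = ‖WithLp.toLp 2 x‖ := by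
  simp [l2, EuclideanSpace.norm_eq]

theorem l2_nonneg (x : ι → ℝ) : 0 ≤ l2 x := Real.sqrt_nonneg _

theorem l2_eq_zero {x : ι → ℝ} : l2 x = 0 ↔ x = 0 := by
  rw [l2_eq_norm, norm_eq_zero, WithLp.toLp_eq_zero]

theorem abs_le_l2 (x : ι → ℝ) (i : ι) : |x i| ≤ l2 x := by
  simpa [l2_eq_norm] using PiLp.norm_apply_le (WithLp.toLp 2 x) i

theorem l2_sub_l2_le_l2_add (a b : ι → ℝ) : l2 a - l2 b ≤ l2 (a + b) := by
  simpa [l2_eq_norm] using norm_sub_norm_le (WithLp.toLp 2 a) (WithLp.toLp 2 (-b))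

theorem l2_le_l2_add_of_dotProduct_eq_zero {a b : ι → ℝ} (h : a ⬝ᵥ b = 0) :
    l2 a ≤ l2 (a + b) := by
  have hinner : inner ℝ (WithLp.toLp 2 a) (WithLp.toLp 2 b) = 0 := by
    simpa [EuclideanSpace.inner_eq_star_dotProduct, dotProduct_comm] using h
  have := norm_add_sq_eq_norm_sq_add_norm_sq_real hinner
  rw [l2_eq_norm, l2_eq_norm, WithLp.toLp_add]
  refine (mul_self_le_mul_self_iff (norm_nonneg _) (norm_nonneg _)).2 ?_
  rw [this]
  exact le_add_of_nonneg_right (mul_self_nonneg _)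

end L2

section LeastSquares

variable {m n : Type*} [Fintype m] [Fintype n]

theorem isUnit_transpose_mul_self_of_injective {A : Matrix m n ℝ} [DecidableEq n]
    (hA : Function.Injective A.mulVec) : IsUnit (Aᵀ * A) := by
  have hker : LinearMap.ker (Aᵀ * A).mulVecLin = ⊥ := by
    rw [ker_mulVecLin_transpose_mul_self]
    exact LinearMap.ker_eq_bot.2 hA
  exact mulVec_injective_iff_isUnit.1 (LinearMap.ker_eq_bot.1 hker)

theorem l2_sub_mulVec_leastSquares_le {A : Matrix m n ℝ} [DecidableEq n] (hA : IsUnit (Aᵀ * A))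
    (y : m → ℝ) (w : n → ℝ) :
    l2 (y - A *ᵥ ((Aᵀ * A)⁻¹ *ᵥ (Aᵀ *ᵥ y))) ≤ l2 (y - A *ᵥ w) := by
  set c := (Aᵀ * A)⁻¹ *ᵥ (Aᵀ *ᵥ y)
  set r := y - A *ᵥ c
  have hnormal : Aᵀ *ᵥ r = 0 := by
    simp only [r, c]
    rw [mulVec_sub, mulVec_mulVec, mulVec_mulVec,
      mul_nonsing_inv _ ((isUnit_iff_isUnit_det _).1 hA), one_mulVec, sub_self]
  have hsplit : y - A *ᵥ w = r + A *ᵥ (c - w) := by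
    simp only [r, mulVec_sub]
    abel
  rw [hsplit]
  apply l2_le_l2_add_of_dotProduct_eq_zero
  rw [dotProduct_mulVec, ← transpose_transpose A, vecMul_transpose,
    hnormal, zero_dotProduct]

end LeastSquares

section ColumnSubmatrix

variable {M N : ℕ}

def extendByZero (S : Finset (Fin N)) (w : {i // i ∈ S} → ℝ) : Fin N → ℝ :=
  fun i => if h : i ∈ S then w ⟨i, h⟩ else 0

theorem extendByZero_of_notMem {S : Finset (Fin N)} (w : {i // i ∈ S} → ℝ) {i : Fin N}
    (hi : i ∉ S) : extendByZero S w i = 0 := dif_neg hi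

theorem sum_extendByZero (S : Finset (Fin N)) (w : {i // i ∈ S} → ℝ) (f : Fin N → ℝ → ℝ)
    (hf : ∀ i, f i 0 = 0) : ∑ i, f i (extendByZero S w i) = ∑ c : {i // i ∈ S}, f c (w c) := by
  rw [← Finset.sum_subset (Finset.subset_univ S) fun i _ hi => by
    rw [extendByZero_of_notMem w hi, hf], ← Finset.sum_coe_sort S]
  exact Finset.sum_congr rfl fun c _ => by simp [extendByZero, c.2]

theorem l2_extendByZero (S : Finset (Fin N)) (w : {i // i ∈ S} → ℝ) :
    l2 (extendByZero S w) = l2 w := by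
  simp only [l2]
  rw [sum_extendByZero S w (fun _ t => t ^ 2) fun _ => zero_pow two_ne_zero]

theorem colSub_mulVec (Φ : Matrix (Fin M) (Fin N) ℝ) (S : Finset (Fin N))
    (w : {i // i ∈ S} → ℝ) : colSub Φ S *ᵥ w = Φ *ᵥ extendByZero S w := by
  funext r
  simp only [mulVec, dotProduct]
  rw [sum_extendByZero S w (fun i t => Φ r i * t) fun _ => mul_zero _]
  rfl

theorem extendByZero_restr {x : Fin N → ℝ} {S : Finset (Fin N)} (hx : ∀ i, x i ≠ 0 → i ∈ S) :
    extendByZero S (restr x S) = x := by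
  funext i
  by_cases hi : i ∈ S
  · simp [extendByZero, restr, hi]
  · rw [extendByZero_of_notMem _ hi, not_not.1 (mt (hx i) hi)]

theorem colSub_mulVec_restr (Φ : Matrix (Fin M) (Fin N) ℝ) {x : Fin N → ℝ} {S : Finset (Fin N)}
    (hx : ∀ i, x i ≠ 0 → i ∈ S) : colSub Φ S *ᵥ restr x S = Φ *ᵥ x := by
  rw [colSub_mulVec, extendByZero_restr hx]

theorem sparse_of_support_subset {K : ℕ} {x : Fin N → ℝ} {S : Finset (Fin N)}
    (hx : ∀ i, x i ≠ 0 → i ∈ S) (hS : S.card ≤ K) : Sparse K x :=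
  (Finset.card_le_card fun i hi => hx i (Finset.mem_filter.1 hi).2).trans hS

theorem sparse_extendByZero {K : ℕ} {S : Finset (Fin N)} (w : {i // i ∈ S} → ℝ)
    (hS : S.card ≤ K) : Sparse K (extendByZero S w) :=
  sparse_of_support_subset (fun _ hi => by_contra fun h => hi (extendByZero_of_notMem w h)) hS

end ColumnSubmatrix

namespace RIP

variable {M N K : ℕ} {Φ : Matrix (Fin M) (Fin N) ℝ} {δ : ℝ}

theorem sqrt_one_sub_mul_l2_le (h : RIP Φ K δ) {x : Fin N → ℝ} (hx : Sparse K x) :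
    √(1 - δ) * l2 x ≤ l2 (Φ *ᵥ x) :=
  calc √(1 - δ) * l2 x = √((1 - δ) * l2 x ^ 2) := by
        rw [Real.sqrt_mul' _ (sq_nonneg _), Real.sqrt_sq (l2_nonneg x)]
    _ ≤ √(l2 (Φ *ᵥ x) ^ 2) := Real.sqrt_le_sqrt (h x hx).1
    _ = l2 (Φ *ᵥ x) := Real.sqrt_sq (l2_nonneg _)

theorem colSub_mulVec_injective (h : RIP Φ K δ) (hδ : δ < 1) {S : Finset (Fin N)}
    (hS : S.card ≤ K) : Function.Injective (colSub Φ S).mulVec := by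
  intro a b hab
  have hzero : Φ *ᵥ extendByZero S (a - b) = 0 := by
    rw [← colSub_mulVec, mulVec_sub, hab, sub_self]
  have hbound := h.sqrt_one_sub_mul_l2_le (sparse_extendByZero (a - b) hS)
  rw [hzero, l2_extendByZero, l2_eq_zero.2 rfl, ← mul_zero √(1 - δ)] at hbound
  have hle := le_of_mul_le_mul_left hbound (Real.sqrt_pos.2 (sub_pos.2 hδ))
  exact sub_eq_zero.1 (l2_eq_zero.1 (le_antisymm hle (l2_nonneg _)))

theorem l2_resid_le (h : RIP Φ K δ) (hδ : δ < 1) {S : Finset (Fin N)} (hS : S.card ≤ K)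
    {x : Fin N → ℝ} (hx : ∀ i, x i ≠ 0 → i ∈ S) {v y : Fin M → ℝ} (hy : y = Φ *ᵥ x + v) :
    l2 (resid Φ S y) ≤ l2 v := by
  have hls := l2_sub_mulVec_leastSquares_le
    (isUnit_transpose_mul_self_of_injective (h.colSub_mulVec_injective hδ hS)) y (restr x S)
  calc l2 (resid Φ S y) ≤ l2 (y - colSub Φ S *ᵥ restr x S) := hls
    _ = l2 v := by rw [colSub_mulVec_restr Φ hx, hy, add_sub_cancel_left]

theorem sqrt_one_sub_mul_abs_le_l2_sub_colSub_mulVec (h : RIP Φ K δ) {x : Fin N → ℝ}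
    {T Λ : Finset (Fin N)} (hx : ∀ i, x i ≠ 0 → i ∈ T) (hK : T.card + Λ.card ≤ K) {j : Fin N}
    (hjΛ : j ∉ Λ) (w : {i // i ∈ Λ} → ℝ) :
    √(1 - δ) * |x j| ≤ l2 (Φ *ᵥ x - colSub Φ Λ *ᵥ w) := by
  rw [colSub_mulVec, ← mulVec_sub]
  have hsparse : Sparse K (x - extendByZero Λ w) := by
    refine sparse_of_support_subset (S := T ∪ Λ) (fun i hi => ?_) ((card_union_le T Λ).trans hK)
    by_contra hiTΛ
    rw [mem_union, not_or] at hiTΛ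
    rw [Pi.sub_apply, extendByZero_of_notMem w hiTΛ.2, not_not.1 (mt (hx i) hiTΛ.1),
      sub_zero] at hi
    exact hi rfl
  calc √(1 - δ) * |x j| = √(1 - δ) * |(x - extendByZero Λ w) j| := by
        rw [Pi.sub_apply, extendByZero_of_notMem w hjΛ, sub_zero]
    _ ≤ √(1 - δ) * l2 (x - extendByZero Λ w) := by gcongr; exact abs_le_l2 _ _
    _ ≤ l2 (Φ *ᵥ (x - extendByZero Λ w)) := h.sqrt_one_sub_mul_l2_le hsparse

theorem sqrt_one_sub_mul_abs_sub_l2_le_l2_resid (h : RIP Φ K δ) {x : Fin N → ℝ}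
    {T Λ : Finset (Fin N)} (hx : ∀ i, x i ≠ 0 → i ∈ T) (hK : T.card + Λ.card ≤ K) {j : Fin N}
    (hjΛ : j ∉ Λ) {v y : Fin M → ℝ} (hy : y = Φ *ᵥ x + v) :
    √(1 - δ) * |x j| - l2 v ≤ l2 (resid Φ Λ y) := by
  obtain ⟨c, hc⟩ : ∃ c, resid Φ Λ y = y - colSub Φ Λ *ᵥ c := ⟨_, rfl⟩
  have hsplit : resid Φ Λ y = (Φ *ᵥ x - colSub Φ Λ *ᵥ c) + v := by
    rw [hc, hy]
    abel
  rw [hsplit]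
  linarith [h.sqrt_one_sub_mul_abs_le_l2_sub_colSub_mulVec hx hK hjΛ c,
    l2_sub_l2_le_l2_add (Φ *ᵥ x - colSub Φ Λ *ᵥ c) v]

end RIP

theorem one_sub_three_mul_le_sqrt_one_sub_mul {δK δ2K : ℝ} (hle : δK ≤ δ2K) (h0 : 0 ≤ δ2K)
    (h1 : δ2K ≤ 1) : 1 - 3 * δ2K ≤ √(1 - δ2K) * (1 - δK) := by
  set s := √(1 - δ2K)
  have hs0 : 0 ≤ s := Real.sqrt_nonneg _
  have hs2 : s ^ 2 = 1 - δ2K := Real.sq_sqrt (by linarith)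
  have hs1 : s ≤ 1 := by nlinarith
  calc 1 - 3 * δ2K = 3 * s ^ 2 - 2 := by rw [hs2]; ring
    -- `s³ - 3 s² + 2 = (1 - s) (2 + 2 s - s²)`
    _ ≤ s * s ^ 2 := by
        nlinarith [mul_nonneg (sub_nonneg.2 hs1) (by nlinarith : 0 ≤ 2 + 2 * s - s ^ 2)]
    _ ≤ s * (1 - δK) := by rw [hs2]; exact mul_le_mul_of_nonneg_left (by linarith) hs0

theorem two_mul_lt_sqrt_one_sub_mul {δK δ2K e a : ℝ} (hle : δK ≤ δ2K) (h0 : 0 ≤ δ2K)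
    (h13 : δ2K < 1 / 3) (he : 0 ≤ e) (h : 2 * (1 - δK) / (1 - 3 * δ2K) * e < a) :
    2 * e < √(1 - δ2K) * a := by
  have hden : 0 < 1 - 3 * δ2K := by linarith
  have hc : 2 ≤ √(1 - δ2K) * (2 * (1 - δK) / (1 - 3 * δ2K)) := by
    rw [← mul_div_assoc, le_div_iff₀ hden]
    linarith [one_sub_three_mul_le_sqrt_one_sub_mul hle h0 (by linarith)]
  calc 2 * e ≤ √(1 - δ2K) * (2 * (1 - δK) / (1 - 3 * δ2K)) * e :=
        mul_le_mul_of_nonneg_right hc he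
    _ < √(1 - δ2K) * a := by
        rw [mul_assoc]
        exact mul_lt_mul_of_pos_left h (Real.sqrt_pos.2 (by linarith))

theorem support_minimizes_residual {M N K : ℕ} (Φ : Matrix (Fin M) (Fin N) ℝ)
    (x : Fin N → ℝ) (T : Finset (Fin N)) (v y : Fin M → ℝ)
    (hy : y = Φ.mulVec x + v) (hT : T.card = K)
    (hsupp : ∀ i, x i ≠ 0 ↔ i ∈ T)
    (δK δ2K : ℝ) (hδK0 : 0 ≤ δK) (hle : δK ≤ δ2K) (hδ2K : δ2K < 1 / 3)
    (hRIPK : RIP Φ K δK) (hRIP2K : RIP Φ (2 * K) δ2K)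
    (hmin : ∀ j ∈ T, (2 * (1 - δK) / (1 - 3 * δ2K)) * l2 v < |x j|) :
    ∀ Λ : Finset (Fin N), Λ.card = K → Λ ≠ T →
      l2 (resid Φ T y) < l2 (resid Φ Λ y) := by
  intro Λ hΛ hΛT
  obtain ⟨j, hjT, hjΛ⟩ := not_subset.1 fun hTΛ =>
    hΛT (eq_of_subset_of_card_le hTΛ (by rw [hT, hΛ])).symm
  have hx : ∀ i, x i ≠ 0 → i ∈ T := fun i => (hsupp i).1
  have hresT := hRIPK.l2_resid_le (by linarith) hT.le hx hy
  have hresΛ := hRIP2K.sqrt_one_sub_mul_abs_sub_l2_le_l2_resid hx (by omega) hjΛ hy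
  have hgap := two_mul_lt_sqrt_one_sub_mul hle (hδK0.trans hle) hδ2K (l2_nonneg v) (hmin j hjT)
  linarith
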